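/- Let T > 0, let K : [0,T] → B(ℋ) be continuous with each K(s) self-adjoint, let G : [0,T] → B(ℋ) be continuous, and let F : [0,T] → B(ℋ) be differentiable with F'(s) = −i[K(s), F(s)] + G(s) for all s ∈ [0,T]. Then for every t ∈ [0,T]: ‖F(t)‖ ≤ ‖F(0)‖ + ∫₀ᵗ ‖G(s)‖ ds. -/

import Mathlib

/-!
Fix `x` and put `k = i K(x)`, which is skew-adjoint. The comparison curve
`z ↦ exp (-(z - x) k) F(x) exp ((z - x) k) + (z - x) G(x)` agrees with `F` to first order at `x`,
and since conjugation by the unitary `exp ((z - x) k)` is isometric its norm is at most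
`‖F(x)‖ + (z - x) ‖G(x)‖`. So the right Dini derivative of `‖F‖` is bounded by `‖G‖`, and the
comparison principle for such derivatives integrates this to the claimed bound.
-/

noncomputable section

open Complex

/-- The commutator `[A,B] = AB - BA` of two bounded operators. -/
def opComm {H : Type*} [NormedAddCommGroup H] [InnerProductSpace ℂ H] [CompleteSpace H]
    (A B : H →L[ℂ] H) : H →L[ℂ] H := A * B - B * A

open Set Filter Topology NormedSpace

theorem eventually_slope_norm_lt_of_hasDerivWithinAt_Ioi {E : Type*} [NormedAddCommGroup E]
    [NormedSpace ℝ E] {f φ : ℝ → E} {v : E} {x g r : ℝ}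
    (hf : HasDerivWithinAt f v (Ioi x) x) (hφ : HasDerivWithinAt φ v (Ioi x) x)
    (hfφ : f x = φ x) (hφg : ∀ z, x < z → ‖φ z‖ ≤ ‖φ x‖ + (z - x) * g) (hr : g < r) :
    ∀ᶠ z in 𝓝[>] x, slope (fun y => ‖f y‖) x z < r := by
  have hψ : HasDerivWithinAt (f - φ) 0 (Ioi x) x :=
    (hf.sub hφ).congr_deriv (sub_self v)
  filter_upwards [hψ.limsup_norm_slope_le (r := r - g) (by simpa using hr),
    self_mem_nhdsWithin] with z hz hxz
  have hzx : 0 < z - x := sub_pos.2 hxz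
  rw [Real.norm_eq_abs, abs_of_pos hzx, inv_mul_lt_iff₀ hzx, Pi.sub_apply, Pi.sub_apply, hfφ,
    sub_self, sub_zero] at hz
  rw [slope_def_field, div_lt_iff₀ hzx]
  calc ‖f z‖ - ‖f x‖ ≤ ‖φ z‖ + ‖f z - φ z‖ - ‖φ x‖ := by
        rw [hfφ]; linarith [norm_le_norm_add_norm_sub' (f z) (φ z)]
    _ < r * (z - x) := by linarith [hφg z hxz]

theorem ContinuousOn.hasDerivWithinAt_integral_Ici {E : Type*} [NormedAddCommGroup E]
    [NormedSpace ℝ E] [CompleteSpace E] {g : ℝ → E} {a b x : ℝ}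
    (hg : ContinuousOn g (Icc a b)) (hx : x ∈ Ico a b) :
    HasDerivWithinAt (fun u => ∫ s in a..u, g s) (g x) (Ici x) x := by
  have hnhds : Icc a b ∈ 𝓝[>] x := Icc_mem_nhdsGT_of_mem hx
  exact intervalIntegral.integral_hasDerivWithinAt_right (t := Ioi x)
    ((hg.mono (Icc_subset_Icc le_rfl hx.2.le)).intervalIntegrable_of_Icc hx.1)
    ⟨Icc a b, hnhds, hg.aestronglyMeasurable measurableSet_Icc⟩
    ((hg x (Ico_subset_Icc_self hx)).mono_of_mem_nhdsWithin hnhds)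

theorem hasDerivAt_exp_smul_neg_mul_mul_exp_smul {𝕂 𝔸 : Type*} [RCLike 𝕂] [NormedRing 𝔸]
    [NormedAlgebra 𝕂 𝔸] [CompleteSpace 𝔸] (a b : 𝔸) :
    HasDerivAt (fun t : 𝕂 => exp (t • -a) * b * exp (t • a)) (b * a - a * b) 0 := by
  refine HasDerivAt.congr_deriv (f := fun t : 𝕂 => exp (t • -a) * b * exp (t • a))
    (((hasDerivAt_exp_smul_const (-a) (0 : 𝕂)).mul_const b).mul
      (hasDerivAt_exp_smul_const a (0 : 𝕂))) ?_
  simp only [zero_smul, NormedSpace.exp_zero, one_mul, mul_one, neg_mul]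
  abel

theorem norm_exp_smul_neg_mul_mul_exp_smul {𝔸 : Type*} [CStarAlgebra 𝔸] {a : 𝔸}
    (ha : a ∈ skewAdjoint 𝔸) (b : 𝔸) (t : ℝ) : ‖exp (t • -a) * b * exp (t • a)‖ = ‖b‖ := by
  let : NormedAlgebra ℚ 𝔸 := .restrictScalars ℚ ℂ 𝔸
  have hu : exp (t • a) ∈ unitary 𝔸 :=
    exp_mem_unitary_of_mem_skewAdjoint (skewAdjoint.smul_mem t ha)
  have hstar : star (exp (t • a)) = exp (t • -a) := by
    rw [star_exp, star_smul, star_trivial, skewAdjoint.mem_iff.mp ha]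
  rw [← hstar, CStarRing.norm_mul_mem_unitary _ hu,
    CStarRing.norm_mem_unitary_mul _ (Unitary.star_mem hu)]

theorem norm_le_norm_add_integral_of_hasDerivWithinAt_commutator {𝔸 : Type*} [CStarAlgebra 𝔸]
    {a b : ℝ} {k G F : ℝ → 𝔸} (hk : ∀ s ∈ Ico a b, k s ∈ skewAdjoint 𝔸)
    (hG : ContinuousOn G (Icc a b)) (hFc : ContinuousOn F (Icc a b))
    (hF : ∀ s ∈ Ico a b, HasDerivWithinAt F (F s * k s - k s * F s + G s) (Ioi s) s) :
    ∀ t ∈ Icc a b, ‖F t‖ ≤ ‖F a‖ + ∫ s in a..t, ‖G s‖ := by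
  intro t ht
  have hab : a ≤ b := ht.1.trans ht.2
  refine image_le_of_liminf_slope_right_le_deriv_boundary hFc.norm (by simp)
    (continuousOn_const.add ?_) (fun x hx => (hG.norm.hasDerivWithinAt_integral_Ici hx).const_add _)
    (fun x hx r hr => ?_) ht
  · have hint : MeasureTheory.IntegrableOn (fun s => ‖G s‖) (uIcc a b) := by
      rw [uIcc_of_le hab]
      exact hG.norm.integrableOn_Icc
    simpa only [uIcc_of_le hab] using intervalIntegral.continuousOn_primitive_interval hint
  set φ : ℝ → 𝔸 := fun z => exp ((z - x) • -k x) * F x * exp ((z - x) • k x) + (z - x) • G x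
  have hφ : HasDerivAt φ (F x * k x - k x * F x + G x) x := by
    have hconj := HasDerivAt.comp_sub_const x x (by
      rw [sub_self]; exact hasDerivAt_exp_smul_neg_mul_mul_exp_smul (𝕂 := ℝ) (k x) (F x))
    have hdrift := ((hasDerivAt_id x).sub_const x).smul_const (G x)
    rw [one_smul] at hdrift
    exact hconj.add hdrift
  have hφ_le : ∀ z, x < z → ‖φ z‖ ≤ ‖φ x‖ + (z - x) * ‖G x‖ := by
    intro z hxz
    have hx0 : φ x = F x := by simp [φ]
    calc ‖φ z‖ ≤ ‖exp ((z - x) • -k x) * F x * exp ((z - x) • k x)‖ + ‖(z - x) • G x‖ :=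
          norm_add_le _ _
      _ = ‖φ x‖ + (z - x) * ‖G x‖ := by
          rw [norm_exp_smul_neg_mul_mul_exp_smul (hk x hx), hx0, norm_smul, Real.norm_of_nonneg
            (sub_pos.2 hxz).le]
  exact (eventually_slope_norm_lt_of_hasDerivWithinAt_Ioi (hF x hx) hφ.hasDerivWithinAt
    (by simp [φ]) hφ_le hr).frequently

theorem statement_7_general {H : Type*} [NormedAddCommGroup H] [InnerProductSpace ℂ H] [CompleteSpace H]
    (T : ℝ) (K G F : ℝ → (H →L[ℂ] H))
    (hKsa : ∀ s ∈ Set.Icc (0:ℝ) T, IsSelfAdjoint (K s))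
    (hGcont : ContinuousOn G (Set.Icc 0 T))
    (hF : ∀ s ∈ Set.Icc (0:ℝ) T,
      HasDerivWithinAt F ((-I) • opComm (K s) (F s) + G s) (Set.Icc 0 T) s) :
    ∀ t ∈ Set.Icc (0:ℝ) T, ‖F t‖ ≤ ‖F 0‖ + ∫ s in (0:ℝ)..t, ‖G s‖ := by
  intro t ht
  have hsub : Icc 0 t ⊆ Icc 0 T := Icc_subset_Icc le_rfl ht.2
  refine norm_le_norm_add_integral_of_hasDerivWithinAt_commutator (k := fun s => I • K s)
    (fun s hs => (hKsa s (hsub (Ico_subset_Icc_self hs))).smul_mem_skewAdjoint conj_I)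
    (hGcont.mono hsub) (fun s hs => (hF s (hsub hs)).continuousWithinAt.mono hsub)
    (fun s hs => ?_) t (right_mem_Icc.2 ht.1)
  have hs' : s ∈ Ico 0 T := ⟨hs.1, hs.2.trans_le ht.2⟩
  refine ((hF s (Ico_subset_Icc_self hs')).mono_of_mem_nhdsWithin
    (Icc_mem_nhdsGT_of_mem hs')).congr_deriv ?_
  simp only [opComm, smul_sub, mul_smul_comm, smul_mul_assoc, neg_smul]
  abel

/-- The variation of the Duhamel principle used in the paper: if
`F'(s) = -i[K(s), F(s)] + G(s)` on `[0,T]` with `K(s)` self-adjoint, then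
`‖F(t)‖ ≤ ‖F(0)‖ + ∫₀ᵗ ‖G(s)‖ ds`. -/
theorem statement_7 {H : Type*} [NormedAddCommGroup H] [InnerProductSpace ℂ H] [CompleteSpace H]
    (T : ℝ) (hT : 0 < T) (K G F : ℝ → (H →L[ℂ] H))
    (hKcont : ContinuousOn K (Set.Icc 0 T))
    (hKsa : ∀ s ∈ Set.Icc (0:ℝ) T, IsSelfAdjoint (K s))
    (hGcont : ContinuousOn G (Set.Icc 0 T))
    (hF : ∀ s ∈ Set.Icc (0:ℝ) T,
      HasDerivWithinAt F ((-I) • opComm (K s) (F s) + G s) (Set.Icc 0 T) s) :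
    ∀ t ∈ Set.Icc (0:ℝ) T, ‖F t‖ ≤ ‖F 0‖ + ∫ s in (0:ℝ)..t, ‖G s‖ :=
  statement_7_general T K G F hKsa hGcont hF
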